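/- Let {P_k}_{k=1}^M be a complex projective 2-design in dimension d, with POVM elements Π_k = (d/M)·P_k. Let f : {1,…,M} → ℝ be any vector of relative frequencies with Σ_{k=1}^M f_k = 1, and define ρ̂ = Σ_{k=1}^M f_k·((d+1)P_k − 𝟙). Then ρ̂ solves the least-squares normal equations for the measurement map: Σ_{k=1}^M tr(Π_k ρ̂)·Π_k = Σ_{k=1}^M f_k·Π_k. -/

import Mathlib

open MeasureTheory Matrix
open scoped Kronecker ComplexOrder

/-- The spectral norm (operator norm on Euclidean space) of a complex matrix. -/
noncomputable def specNorm {m : Type*} [Fintype m] [DecidableEq m]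
    (A : Matrix m m ℂ) : ℝ :=
  ‖Matrix.toEuclideanCLM (𝕜 := ℂ) A‖

/-- The Frobenius norm `√tr(A†A)` of a complex matrix. -/
noncomputable def frobNorm {m : Type*} [Fintype m]
    (A : Matrix m m ℂ) : ℝ :=
  Real.sqrt ((Aᴴ * A).trace.re)

/-- The positive semidefinite square root (the removed Mathlib `Matrix.PosSemidef.sqrt`, with its old definition). -/
noncomputable def posSemidefSqrt {m : Type*} [Fintype m] [DecidableEq m]
    {A : Matrix m m ℂ} (hA : A.PosSemidef) : Matrix m m ℂ :=
  hA.1.eigenvectorUnitary.1 * diagonal ((↑) ∘ Real.sqrt ∘ hA.1.eigenvalues) *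
    (star hA.1.eigenvectorUnitary : Matrix m m ℂ)

/-- The trace norm `tr √(A†A)` of a complex matrix. -/
noncomputable def traceNorm {m : Type*} [Fintype m] [DecidableEq m]
    (A : Matrix m m ℂ) : ℝ :=
  (posSemidefSqrt (Matrix.posSemidef_conjTranspose_mul_self A)).trace.re

/-- The residual spectral mass `Σ_r(A)`: for a Hermitian matrix with eigenvalues
`λ₁ ≥ … ≥ λ_d`, this is `Σ_{j=r+1}^d λ_j`, i.e. the trace minus the largest possible
sum of `r` eigenvalues (junk value `0` for non-Hermitian matrices). -/
noncomputable def residualMass {m : Type*} [Fintype m] [DecidableEq m]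
    (r : ℕ) (A : Matrix m m ℂ) : ℝ :=
  if h : A.IsHermitian then
    A.trace.re - sSup {x : ℝ | ∃ s : Finset m, s.card = r ∧ x = ∑ i ∈ s, h.eigenvalues i}
  else 0

/-- A density matrix: positive semidefinite with unit trace. -/
def IsDensity {m : Type*} [Fintype m] (A : Matrix m m ℂ) : Prop :=
  A.PosSemidef ∧ A.trace = 1

/-- A rank-one orthogonal projector. -/
def IsRankOneProj {m : Type*} [Fintype m] [DecidableEq m] (P : Matrix m m ℂ) : Prop :=
  Pᴴ = P ∧ P * P = P ∧ P.rank = 1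

/-- A complex projective 2-design in dimension `d`: rank-one orthogonal projectors with
`Σ_k tr(P_k X) P_k = (M/(d(d+1))) (X + tr(X) 𝟙)` for all `X`. -/
def IsTwoDesign {d M : ℕ} (P : Fin M → Matrix (Fin d) (Fin d) ℂ) : Prop :=
  (∀ k, IsRankOneProj (P k)) ∧
  ∀ X : Matrix (Fin d) (Fin d) ℂ,
    ∑ k, (P k * X).trace • P k
      = ((M : ℂ) / ((d : ℂ) * ((d : ℂ) + 1))) • (X + X.trace • (1 : Matrix (Fin d) (Fin d) ℂ))

/-- A single-qubit complex projective 2-design. -/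
def IsQubitTwoDesign {m : ℕ} (P : Fin m → Matrix (Fin 2) (Fin 2) ℂ) : Prop :=
  (∀ k, IsRankOneProj (P k)) ∧
  ∀ X : Matrix (Fin 2) (Fin 2) ℂ,
    ∑ k, (P k * X).trace • P k
      = ((m : ℂ) / 6) • (X + X.trace • (1 : Matrix (Fin 2) (Fin 2) ℂ))

/-- `n`-fold tensor product of `2×2` matrices, as a matrix indexed by functions
`Fin n → Fin 2`, with entries `(⊗_j A_j)(x,y) = Π_j A_j (x j) (y j)`. -/
noncomputable def nKron {n : ℕ} (A : Fin n → Matrix (Fin 2) (Fin 2) ℂ) :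
    Matrix (Fin n → Fin 2) (Fin n → Fin 2) ℂ :=
  Matrix.of fun x y => ∏ j, A j (x j) (y j)

/-- Partial trace over the second tensor factor. -/
noncomputable def ptrace2 {m : Type*} [Fintype m] (A : Matrix (m × m) (m × m) ℂ) : Matrix m m ℂ :=
  Matrix.of fun a a' => ∑ b, A (a, b) (a', b)

/-! Each `P k` is an idempotent of rank one, hence has trace one, so `S = ∑ f k • P k` has
trace one and `ρhat = (d + 1) • S - 1` has trace `(d + 1) - d = 1`. Hence
`ρhat + tr ρhat • 1 = (d + 1) • S`, and the 2-design identity turns the left-hand side into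
`(d / M)² • (M / d) • S = (d / M) • S`; no case split on `d` or `M` is needed, since
`x * x * x⁻¹ = x` holds in any field. -/
theorem Matrix.trace_eq_rank_of_isIdempotentElem {K n : Type*} [Field K] [Fintype n]
    [DecidableEq n] {A : Matrix n n K} (hA : IsIdempotentElem A) : A.trace = A.rank := by
  have hlin : IsIdempotentElem A.mulVecLin := by
    rw [IsIdempotentElem, Module.End.mul_eq_comp, ← Matrix.mulVecLin_mul, hA.eq]
  rw [← Matrix.trace_toLin'_eq, Matrix.toLin'_apply']
  exact (LinearMap.isProj_range_iff_isIdempotentElem _ |>.mpr hlin).trace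

theorem IsRankOneProj.trace_eq_one {m : Type*} [Fintype m] [DecidableEq m]
    {P : Matrix m m ℂ} (hP : IsRankOneProj P) : P.trace = 1 := by
  rw [Matrix.trace_eq_rank_of_isIdempotentElem hP.2.1, hP.2.2, Nat.cast_one]

theorem Matrix.trace_sum_smul_of_trace_eq_one {ι n R : Type*} [Fintype ι] [Fintype n]
    [Semiring R] (c : ι → R) {P : ι → Matrix n n R} (hP : ∀ k, (P k).trace = 1) :
    (∑ k, c k • P k).trace = ∑ k, c k := by
  simp only [Matrix.trace_sum, Matrix.trace_smul, hP, smul_eq_mul, mul_one]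

theorem Matrix.sum_trace_mul_smul_smul {ι n R : Type*} [Fintype ι] [Fintype n] [CommSemiring R]
    (c : R) (P : ι → Matrix n n R) (X : Matrix n n R) :
    ∑ k, ((c • P k) * X).trace • (c • P k) = (c * c) • ∑ k, (P k * X).trace • P k := by
  simp only [Finset.smul_sum, Matrix.smul_mul, Matrix.trace_smul, smul_smul, smul_eq_mul]
  ring_nf

theorem IsTwoDesign.sum_trace_mul_smul_of_trace_eq_one {d M : ℕ}
    {P : Fin M → Matrix (Fin d) (Fin d) ℂ} (hP : IsTwoDesign P)
    {S : Matrix (Fin d) (Fin d) ℂ} (hS : S.trace = 1) :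
    ∑ k, (P k * (((d : ℂ) + 1) • S - 1)).trace • P k = ((M : ℂ) / d) • S := by
  have hd1 : (d : ℂ) + 1 ≠ 0 := by exact_mod_cast d.succ_ne_zero
  have htrace : (((d : ℂ) + 1) • S - 1).trace = 1 := by
    rw [Matrix.trace_sub, Matrix.trace_smul, hS, Matrix.trace_one, Fintype.card_fin, smul_eq_mul]
    ring
  rw [hP.2, htrace, one_smul, sub_add_cancel, smul_smul, ← div_div, div_mul_cancel₀ _ hd1]

/-- The linear estimator built from relative frequencies solves the
least-squares normal equations `Σ_k tr(Π_k ρ̂) Π_k = Σ_k f_k Π_k`. -/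
theorem frequency_estimator_solves_normal_equations
    {d M : ℕ} (P : Fin M → Matrix (Fin d) (Fin d) ℂ) (hP : IsTwoDesign P)
    (Povm : Fin M → Matrix (Fin d) (Fin d) ℂ)
    (hPovm : ∀ k, Povm k = ((d : ℂ) / (M : ℂ)) • P k)
    (f : Fin M → ℝ) (hf : ∑ k, f k = 1)
    (ρhat : Matrix (Fin d) (Fin d) ℂ)
    (hρhat : ρhat = ∑ k, (f k : ℂ) • (((d : ℂ) + 1) • P k - 1)) :
    ∑ k, (Povm k * ρhat).trace • Povm k = ∑ k, (f k : ℂ) • Povm k := by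
  obtain rfl : Povm = fun k => ((d : ℂ) / M) • P k := funext hPovm
  have hfC : ∑ k, (f k : ℂ) = 1 := by exact_mod_cast hf
  set S := ∑ k, (f k : ℂ) • P k
  have hS : S.trace = 1 :=
    (Matrix.trace_sum_smul_of_trace_eq_one _ fun k => (hP.1 k).trace_eq_one).trans hfC
  have hρ : ρhat = ((d : ℂ) + 1) • S - 1 := by
    simp only [hρhat, smul_sub, Finset.sum_sub_distrib, S, Finset.smul_sum,
      smul_comm _ ((d : ℂ) + 1), ← Finset.sum_smul, hfC, one_smul]
  calc ∑ k, (((d : ℂ) / M) • P k * ρhat).trace • ((d : ℂ) / M) • P k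
      = ((d : ℂ) / M * (d / M)) • ((M : ℂ) / d) • S := by
        rw [Matrix.sum_trace_mul_smul_smul, hρ, hP.sum_trace_mul_smul_of_trace_eq_one hS]
    _ = ((d : ℂ) / M) • S := by rw [smul_smul, ← inv_div (d : ℂ) M, mul_self_mul_inv]
    _ = ∑ k, (f k : ℂ) • ((d : ℂ) / M) • P k := by
        simp only [S, Finset.smul_sum, smul_comm ((d : ℂ) / M)]
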